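/- Let u_n be the number of uniquely closable Motzkin trees with exactly n nodes. Then u_0 = 0, u_1 = 0, u_2 = 1, u_3 = 0, u_4 = 1, u_5 = 1, u_6 = 2, u_7 = 2, and for every n ≥ 0: (256n²+256n)·u_n + (−128n²−640n−512)·u_{n+1} + (−128n²−704n−880)·u_{n+2} + (−32n²−64n+152)·u_{n+3} + (64n²+592n+1324)·u_{n+4} + (24n²+232n+540)·u_{n+5} + (−16n²−200n−616)·u_{n+6} + (−2n²−32n−128)·u_{n+7} + (n²+17n+72)·u_{n+8} = 0. -/

import Mathlib

/-
A closed term with skeleton `X` is unique exactly when every leaf of `X` lies under exactly one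
binder: then every index must be `0`, and otherwise some leaf has a second admissible index.
Let `C` and `F` count the trees with this property when placed under one, respectively no,
binder; splitting at the root gives `C = X + X C²` and `F = X C + X F²`. Hence `R = 1 - 2XC`
and `S = 1 - 2XF` satisfy `R² = 1 - 4X²` and `S² = 1 - 2X + 2XR`. Differentiating these, `S`
and `RS` satisfy a first-order linear differential system with polynomial coefficients, and
eliminating `RS` gives a linear second-order equation for `S`. Its coefficient of `Xⁿ⁺⁷` is the
recurrence, since the `(n+1)`-st coefficient of `S` is `-2 uₙ`.
-/

/-- Motzkin trees (binary-unary trees): leaf `v`, unary `l`, binary `a`. -/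
inductive Mot : Type
  | v : Mot
  | l : Mot → Mot
  | a : Mot → Mot → Mot
deriving DecidableEq

/-- Lambda terms in de Bruijn form. -/
inductive Lam : Type
  | v : Nat → Lam
  | l : Lam → Lam
  | a : Lam → Lam → Lam
deriving DecidableEq

/-- `t` is closed at depth `d`. -/
def Lam.closedAt : Lam → Nat → Prop
  | .v i, d => i < d
  | .l t, d => t.closedAt (d + 1)
  | .a s t, d => s.closedAt d ∧ t.closedAt d

/-- The Motzkin-tree skeleton of a de Bruijn term. -/
def Lam.skel : Lam → Mot
  | .v _ => .v
  | .l t => .l t.skel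
  | .a s t => .a s.skel t.skel

/-- Total node count of a Motzkin tree. -/
def Mot.nodes : Mot → ℕ
  | .v => 1
  | .l t => 1 + t.nodes
  | .a s t => 1 + s.nodes + t.nodes

/-- A Motzkin tree is uniquely closable if exactly one closed term has it as skeleton. -/
def Mot.UniquelyClosable (X : Mot) : Prop := ∃! t : Lam, t.closedAt 0 ∧ t.skel = X

/-- `u n` is the number of uniquely closable Motzkin trees with exactly `n` nodes. -/
noncomputable def u (n : ℕ) : ℕ := Nat.card {t : Mot // t.nodes = n ∧ t.UniquelyClosable}

open Finset PowerSeries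

namespace Mot

def LeavesAtDepthOne : Mot → ℕ → Prop
  | v, d => d = 1
  | l t, d => t.LeavesAtDepthOne (d + 1)
  | a s t, d => s.LeavesAtDepthOne d ∧ t.LeavesAtDepthOne d

theorem not_leavesAtDepthOne {d : ℕ} (hd : 2 ≤ d) : ∀ X : Mot, ¬ X.LeavesAtDepthOne d
  | v => by simp only [LeavesAtDepthOne]; omega
  | l t => not_leavesAtDepthOne (by omega) t
  | a s _ => fun h => not_leavesAtDepthOne hd s h.1

def labelZero : Mot → Lam
  | v => .v 0
  | l t => .l t.labelZero
  | a s t => .a s.labelZero t.labelZero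

theorem closedAt_labelZero : ∀ {X : Mot} {d : ℕ}, X.LeavesAtDepthOne d → X.labelZero.closedAt d
  | v, _, h => by simp_all [LeavesAtDepthOne, labelZero, Lam.closedAt]
  | l _, _, h => closedAt_labelZero (d := _ + 1) h
  | a _ _, _, h => ⟨closedAt_labelZero h.1, closedAt_labelZero h.2⟩

theorem skel_labelZero : ∀ X : Mot, X.labelZero.skel = X
  | v => rfl
  | l t => congrArg l t.skel_labelZero
  | a s t => congrArg₂ a s.skel_labelZero t.skel_labelZero

end Mot

namespace Lam

theorem eq_labelZero_of_closedAt :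
    ∀ {t : Lam} {d : ℕ}, t.closedAt d → t.skel.LeavesAtDepthOne d → t = t.skel.labelZero
  | v _, _, ht, h => by
    simp only [closedAt, skel, Mot.LeavesAtDepthOne, Mot.labelZero, v.injEq] at ht h ⊢
    omega
  | l _, _, ht, h => congrArg l (eq_labelZero_of_closedAt (d := _ + 1) ht h)
  | a _ _, _, ht, h =>
    congrArg₂ a (eq_labelZero_of_closedAt ht.1 h.1) (eq_labelZero_of_closedAt ht.2 h.2)

theorem exists_ne_closedAt_skel_eq : ∀ {t : Lam} {d : ℕ}, t.closedAt d →
    ¬ t.skel.LeavesAtDepthOne d → ∃ t' ≠ t, t'.closedAt d ∧ t'.skel = t.skel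
  | v i, d, ht, h => by
    simp only [closedAt, skel, Mot.LeavesAtDepthOne] at ht h
    exact ⟨v (1 - i), by simp only [ne_eq, v.injEq]; omega, by simp only [closedAt]; omega, rfl⟩
  | l t, d, ht, h => by
    obtain ⟨t', hne, hc, hs⟩ := exists_ne_closedAt_skel_eq (d := d + 1) ht h
    exact ⟨l t', by simpa using hne, hc, by simp [skel, hs]⟩
  | a s t, d, ht, h => by
    by_cases hs : s.skel.LeavesAtDepthOne d
    · obtain ⟨t', hne, hc, hsk⟩ := exists_ne_closedAt_skel_eq ht.2 fun ht' => h ⟨hs, ht'⟩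
      exact ⟨a s t', by simpa using hne, ⟨ht.1, hc⟩, by simp [skel, hsk]⟩
    · obtain ⟨s', hne, hc, hsk⟩ := exists_ne_closedAt_skel_eq ht.1 hs
      exact ⟨a s' t, by simp [hne], ⟨hc, ht.2⟩, by simp [skel, hsk]⟩

end Lam

namespace Mot

theorem uniquelyClosable_iff (X : Mot) : X.UniquelyClosable ↔ X.LeavesAtDepthOne 0 := by
  constructor
  · rintro ⟨t, ⟨ht, rfl⟩, huniq⟩
    by_contra h
    obtain ⟨t', hne, hc, hs⟩ := Lam.exists_ne_closedAt_skel_eq ht h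
    exact hne (huniq t' ⟨hc, hs⟩)
  · intro h
    refine ⟨X.labelZero, ⟨closedAt_labelZero h, skel_labelZero X⟩, ?_⟩
    rintro t ⟨ht, rfl⟩
    exact Lam.eq_labelZero_of_closedAt ht h

def depthOneFinset : ℕ → ℕ → Finset Mot
  | _, 0 => ∅
  | d, n + 1 =>
    (if d = 1 ∧ n = 0 then {v} else ∅) ∪ (depthOneFinset (d + 1) n).image l ∪
      (antidiagonal n).attach.biUnion fun p =>
        (depthOneFinset d p.1.1 ×ˢ depthOneFinset d p.1.2).image fun st => a st.1 st.2
  termination_by _ n => n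
  decreasing_by
    · omega
    · have := mem_antidiagonal.1 p.2; omega
    · have := mem_antidiagonal.1 p.2; omega

@[simp]
theorem depthOneFinset_zero (d : ℕ) : depthOneFinset d 0 = ∅ := by
  rw [depthOneFinset]

theorem depthOneFinset_succ (d n : ℕ) :
    depthOneFinset d (n + 1) =
      (if d = 1 ∧ n = 0 then {v} else ∅) ∪ (depthOneFinset (d + 1) n).image l ∪
        (antidiagonal n).biUnion fun p =>
          (depthOneFinset d p.1 ×ˢ depthOneFinset d p.2).image fun st => a st.1 st.2 := by
  rw [depthOneFinset]
  congr 1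
  ext
  simp

theorem mem_depthOneFinset {X : Mot} {d n : ℕ} :
    X ∈ depthOneFinset d n ↔ X.nodes = n ∧ X.LeavesAtDepthOne d := by
  induction X generalizing d n with
  | v =>
    cases n <;> simp [depthOneFinset_succ, nodes, LeavesAtDepthOne, apply_ite (v ∈ ·), and_comm]
  | l t ih =>
    cases n <;> simp [depthOneFinset_succ, nodes, LeavesAtDepthOne, ih, apply_ite (l t ∈ ·),
      add_comm 1]
  | a s t ihs iht =>
    cases n <;> simp [depthOneFinset_succ, nodes, LeavesAtDepthOne, ihs, iht, apply_ite (a s t ∈ ·),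
      add_comm 1, add_right_comm _ 1]

theorem depthOneFinset_eq_empty {d : ℕ} (hd : 2 ≤ d) (n : ℕ) : depthOneFinset d n = ∅ :=
  eq_empty_of_forall_notMem fun X hX => not_leavesAtDepthOne hd X (mem_depthOneFinset.1 hX).2

theorem card_depthOneFinset_succ (d n : ℕ) :
    #(depthOneFinset d (n + 1)) = (if d = 1 ∧ n = 0 then 1 else 0) + #(depthOneFinset (d + 1) n) +
      ∑ p ∈ antidiagonal n, #(depthOneFinset d p.1) * #(depthOneFinset d p.2) := by
  have ha : Function.Injective fun st : Mot × Mot => a st.1 st.2 := fun _ _ h => by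
    simpa [Prod.ext_iff] using h
  rw [depthOneFinset_succ, card_union_of_disjoint, card_union_of_disjoint, apply_ite card,
    card_singleton, card_empty, card_image_of_injective _ fun _ _ => l.inj, card_biUnion]
  · simp_rw [card_image_of_injective _ ha, card_product]
  · intro p hp q hq hpq
    simp_rw [Function.onFun, disjoint_left, mem_image]
    rintro _ ⟨⟨s, t⟩, hst, rfl⟩ ⟨⟨s', t'⟩, hst', h⟩
    simp only [mem_product, mem_depthOneFinset, a.injEq] at hst hst' h
    obtain ⟨rfl, rfl⟩ := h
    exact hpq ((HasAntidiagonal.antidiagonal_congr hp hq).2 (hst.1.1.symm.trans hst'.1.1))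
  · split_ifs <;> simp
  · split_ifs <;> simp [disjoint_left]

theorem card_depthOneFinset_one_succ (n : ℕ) :
    #(depthOneFinset 1 (n + 1)) = (if n = 0 then 1 else 0) +
      ∑ p ∈ antidiagonal n, #(depthOneFinset 1 p.1) * #(depthOneFinset 1 p.2) := by
  simp [card_depthOneFinset_succ, depthOneFinset_eq_empty]

theorem card_depthOneFinset_zero_succ (n : ℕ) :
    #(depthOneFinset 0 (n + 1)) = #(depthOneFinset 1 n) +
      ∑ p ∈ antidiagonal n, #(depthOneFinset 0 p.1) * #(depthOneFinset 0 p.2) := by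
  simp [card_depthOneFinset_succ]

end Mot

theorem u_eq_card (n : ℕ) : u n = #(Mot.depthOneFinset 0 n) := by
  rw [u, ← Nat.card_eq_finsetCard]
  exact Nat.card_congr <| Equiv.subtypeEquivRight fun X => by
    rw [Mot.mem_depthOneFinset, Mot.uniquelyClosable_iff]

theorem u_values :
    u 0 = 0 ∧ u 1 = 0 ∧ u 2 = 1 ∧ u 3 = 0 ∧ u 4 = 1 ∧ u 5 = 1 ∧ u 6 = 2 ∧ u 7 = 2 := by
  simp [u_eq_card, Mot.card_depthOneFinset_zero_succ, Mot.card_depthOneFinset_one_succ,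
    Finset.Nat.sum_antidiagonal_succ]

noncomputable def depthOneSeries (d : ℕ) : ℚ⟦X⟧ := mk fun n => (#(Mot.depthOneFinset d n) : ℚ)

theorem coeff_depthOneSeries (d n : ℕ) :
    coeff n (depthOneSeries d) = #(Mot.depthOneFinset d n) :=
  coeff_mk _ _

theorem depthOneSeries_one : depthOneSeries 1 = X + X * depthOneSeries 1 ^ 2 := by
  ext (_ | n)
  · simp [coeff_depthOneSeries]
  · rw [map_add, coeff_succ_X_mul, sq, coeff_mul, coeff_depthOneSeries,
      Mot.card_depthOneFinset_one_succ, coeff_X]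
    simp [coeff_depthOneSeries]

theorem depthOneSeries_zero :
    depthOneSeries 0 = X * depthOneSeries 1 + X * depthOneSeries 0 ^ 2 := by
  ext (_ | n)
  · simp [coeff_depthOneSeries]
  · rw [map_add, coeff_succ_X_mul, coeff_succ_X_mul, sq, coeff_mul, coeff_depthOneSeries,
      Mot.card_depthOneFinset_zero_succ]
    simp [coeff_depthOneSeries]

theorem sq_one_sub_two_X_mul_depthOneSeries_one :
    (1 - 2 * X * depthOneSeries 1) ^ 2 = 1 - 4 * X ^ 2 := by
  linear_combination (-4 * X) * depthOneSeries_one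

theorem sq_one_sub_two_X_mul_depthOneSeries_zero :
    (1 - 2 * X * depthOneSeries 0) ^ 2 = 1 - 2 * X + 2 * X * (1 - 2 * X * depthOneSeries 1) := by
  linear_combination (-4 * X) * depthOneSeries_zero

namespace Derivation

variable {R A : Type*} [CommRing R] [CommRing A] [Algebra R A] (D : Derivation R A A)

@[simp]
theorem map_ofNat (n : ℕ) [n.AtLeastTwo] : D (no_index (OfNat.ofNat n : A)) = 0 :=
  D.map_natCast n

theorem second_order_eq_of_system {p a b c e s y : A} (hs : p * D s = a * s + b * y)
    (hy : p * D y = c * s + e * y) :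
    b * p ^ 2 * D (D s) = p * (a * b + b * e + p * D b - b * D p) * D s +
      (p * (b * D a - a * D b) + b * (b * c - a * e)) * s := by
  have hs' := congrArg D hs
  simp only [leibniz, smul_eq_mul, map_add] at hs'
  linear_combination b * p * hs' + b ^ 2 * hy - (p * D b + b * e) * hs

end Derivation

namespace PowerSeries

theorem coeff_ofNat_mul {R : Type*} [CommSemiring R] (n : ℕ) [n.AtLeastTwo] (k : ℕ)
    (f : R⟦X⟧) : coeff k ((no_index (OfNat.ofNat n : R⟦X⟧)) * f) = OfNat.ofNat n * coeff k f := by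
  rw [← map_ofNat (C (R := R)) n, coeff_C_mul]

theorem coeff_succ_one_sub_two_X_mul {R : Type*} [CommRing R] (f : R⟦X⟧) (n : ℕ) :
    coeff (n + 1) (1 - 2 * X * f) = -2 * coeff n f := by
  simp [mul_assoc, coeff_ofNat_mul]

theorem coeff_X_pow_mul_iterate_derivative {R : Type*} [CommSemiring R] (f : R⟦X⟧)
    {e j N : ℕ} (h : e ≤ N + j) :
    coeff N (X ^ e * (d⁄dX R)^[j] f) = (N + j - e).descFactorial j * coeff (N + j - e) f := by
  rw [coeff_X_pow_mul']
  split_ifs with he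
  · rw [coeff_iterate_derivative, ← Nat.add_descFactorial_eq_ascFactorial,
      show N - e + j = N + j - e by omega]
  · rw [Nat.descFactorial_eq_zero_iff_lt.2 (by omega), Nat.cast_zero, zero_mul]

section SquareRoots

variable {K : Type*} [Field K] [CharZero K] {R S : K⟦X⟧}

local notation "∂" => d⁄dX K

theorem eq_of_two_mul_eq {f g : K⟦X⟧} (h : 2 * f = 2 * g) : f = g := by
  have h2 : IsUnit (2 : K⟦X⟧) := isUnit_iff_constantCoeff.2 <| by
    rw [map_ofNat]
    exact isUnit_iff_ne_zero.2 two_ne_zero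
  exact h2.mul_left_cancel h

theorem one_sub_four_X_sq_mul_derivative (hR : R ^ 2 = 1 - 4 * X ^ 2) :
    (1 - 4 * X ^ 2) * ∂ R = -4 * X * R := by
  have h := congrArg ∂ hR
  simp only [map_sub, Derivation.leibniz_pow, Derivation.map_one_eq_zero, Derivation.map_ofNat,
    Derivation.leibniz, derivative_X, smul_eq_mul, nsmul_eq_mul, Nat.cast_ofNat,
    Nat.add_one_sub_one] at h
  apply eq_of_two_mul_eq
  linear_combination R * h - 2 * ∂ R * hR

theorem mul_derivative_of_sq_eq (hR : R ^ 2 = 1 - 4 * X ^ 2)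
    (hS : S ^ 2 = 1 - 2 * X + 2 * X * R) :
    (1 - 4 * X ^ 2) * (1 - 4 * X + 16 * X ^ 4) * ∂ S =
      (-1 + 4 * X ^ 2 + 16 * X ^ 3 - 64 * X ^ 5) * S + (1 - 8 * X ^ 2 + 8 * X ^ 3) * (R * S) := by
  -- `S ^ 2 * (1 - 2 * X - 2 * X * R) = 1 - 4 * X + 16 * X ^ 4`, so multiplying `S * ∂ S` by
  -- `S * (1 - 2 * X - 2 * X * R)` isolates `∂ S`.
  have h := congrArg ∂ hS
  simp only [map_add, map_sub, Derivation.leibniz_pow, Derivation.map_one_eq_zero,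
    Derivation.map_ofNat, Derivation.leibniz, derivative_X, smul_eq_mul, nsmul_eq_mul,
    Nat.cast_ofNat, Nat.add_one_sub_one] at h
  apply eq_of_two_mul_eq
  linear_combination S * (1 - 2 * X - 2 * X * R) *
      ((1 - 4 * X ^ 2) * h + 2 * X * one_sub_four_X_sq_mul_derivative hR) -
    2 * (1 - 4 * X ^ 2) * ∂ S * ((1 - 2 * X - 2 * X * R) * hS - 4 * X ^ 2 * hR) -
    4 * X * (1 - 8 * X ^ 2) * S * hR

theorem mul_derivative_mul_of_sq_eq (hR : R ^ 2 = 1 - 4 * X ^ 2)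
    (hS : S ^ 2 = 1 - 2 * X + 2 * X * R) :
    (1 - 4 * X ^ 2) * (1 - 4 * X + 16 * X ^ 4) * ∂ (R * S) =
      (1 - 8 * X ^ 2 + 8 * X ^ 3) * (1 - 4 * X ^ 2) * S +
        (-1 + 4 * X ^ 2 + 16 * X ^ 3 - 64 * X ^ 5 - 4 * X * (1 - 4 * X + 16 * X ^ 4)) *
          (R * S) := by
  rw [Derivation.leibniz, smul_eq_mul, smul_eq_mul]
  linear_combination (1 - 4 * X + 16 * X ^ 4) * S * one_sub_four_X_sq_mul_derivative hR +
    R * mul_derivative_of_sq_eq hR hS + (1 - 8 * X ^ 2 + 8 * X ^ 3) * S * hR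

theorem ode_of_sq_eq (hR : R ^ 2 = 1 - 4 * X ^ 2) (hS : S ^ 2 = 1 - 2 * X + 2 * X * R) :
    (1 - 2 * X - 16 * X ^ 2 + 24 * X ^ 3 + 64 * X ^ 4 - 32 * X ^ 5 - 128 * X ^ 6 - 128 * X ^ 7 +
        256 * X ^ 8) * ∂^[2] S +
      (-2 + 8 * X - 32 * X ^ 2 + 16 * X ^ 3 + 160 * X ^ 4 - 64 * X ^ 5 - 256 * X ^ 6) * ∂ S +
      (12 * X - 36 * X ^ 2 - 104 * X ^ 3 + 80 * X ^ 4 + 256 * X ^ 5) * S = 0 := by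
  have h := Derivation.second_order_eq_of_system ∂ (mul_derivative_of_sq_eq hR hS)
    (mul_derivative_mul_of_sq_eq hR hS)
  simp only [map_add, map_sub, map_neg, Derivation.leibniz, Derivation.leibniz_pow,
    Derivation.map_one_eq_zero, Derivation.map_ofNat, derivative_X, smul_eq_mul, nsmul_eq_mul,
    Nat.cast_ofNat, Nat.add_one_sub_one] at h
  rw [Function.iterate_succ_apply, Function.iterate_one]
  have hunit : IsUnit ((1 - 2 * X) * (1 - 4 * X ^ 2) * (1 - 4 * X + 16 * X ^ 4) : K⟦X⟧) :=
    isUnit_iff_constantCoeff.2 (by simp)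
  refine hunit.mul_left_cancel ?_
  linear_combination h

end SquareRoots

theorem coeff_recurrence_of_ode {K : Type*} [CommRing K] {S : K⟦X⟧}
    (hS : (1 - 2 * X - 16 * X ^ 2 + 24 * X ^ 3 + 64 * X ^ 4 - 32 * X ^ 5 - 128 * X ^ 6 -
        128 * X ^ 7 + 256 * X ^ 8) * (d⁄dX K)^[2] S +
      (-2 + 8 * X - 32 * X ^ 2 + 16 * X ^ 3 + 160 * X ^ 4 - 64 * X ^ 5 - 256 * X ^ 6) * d⁄dX K S +
      (12 * X - 36 * X ^ 2 - 104 * X ^ 3 + 80 * X ^ 4 + 256 * X ^ 5) * S = 0) (n : ℕ) :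
    (256 * (n : K) ^ 2 + 256 * n) * coeff (n + 1) S +
      (-128 * (n : K) ^ 2 - 640 * n - 512) * coeff (n + 2) S +
      (-128 * (n : K) ^ 2 - 704 * n - 880) * coeff (n + 3) S +
      (-32 * (n : K) ^ 2 - 64 * n + 152) * coeff (n + 4) S +
      (64 * (n : K) ^ 2 + 592 * n + 1324) * coeff (n + 5) S +
      (24 * (n : K) ^ 2 + 232 * n + 540) * coeff (n + 6) S +
      (-16 * (n : K) ^ 2 - 200 * n - 616) * coeff (n + 7) S +
      (-2 * (n : K) ^ 2 - 32 * n - 128) * coeff (n + 8) S +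
      ((n : K) ^ 2 + 17 * n + 72) * coeff (n + 9) S = 0 := by
  have h := congrArg (coeff (n + 7)) hS
  simp only [add_mul, sub_mul, mul_assoc, one_mul, neg_mul, map_add, map_sub, map_neg, map_zero,
    coeff_ofNat_mul] at h
  -- `X ^ 8` is the one power that can exceed `n + 7`; the falling factorial vanishes there.
  rw [coeff_X_pow_mul_iterate_derivative (e := 8) _ (by omega)] at h
  simp (disch := omega) only [coeff_succ_X_mul, coeff_derivative, coeff_iterate_derivative,
    coeff_X_pow_mul', if_pos] at h
  simp only [add_assoc, Nat.reduceAdd, Nat.reduceSubDiff, add_tsub_cancel_right, tsub_zero,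
    Nat.ascFactorial_succ, Nat.ascFactorial_zero, Nat.descFactorial_succ,
    Nat.descFactorial_zero] at h
  push_cast at h
  linear_combination h

end PowerSeries

theorem stmt15 :
    u 0 = 0 ∧ u 1 = 0 ∧ u 2 = 1 ∧ u 3 = 0 ∧ u 4 = 1 ∧ u 5 = 1 ∧ u 6 = 2 ∧ u 7 = 2 ∧
    ∀ n : ℕ,
      (256 * (n : ℤ) ^ 2 + 256 * (n : ℤ)) * (u n : ℤ) +
      (-128 * (n : ℤ) ^ 2 - 640 * (n : ℤ) - 512) * (u (n + 1) : ℤ) +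
      (-128 * (n : ℤ) ^ 2 - 704 * (n : ℤ) - 880) * (u (n + 2) : ℤ) +
      (-32 * (n : ℤ) ^ 2 - 64 * (n : ℤ) + 152) * (u (n + 3) : ℤ) +
      (64 * (n : ℤ) ^ 2 + 592 * (n : ℤ) + 1324) * (u (n + 4) : ℤ) +
      (24 * (n : ℤ) ^ 2 + 232 * (n : ℤ) + 540) * (u (n + 5) : ℤ) +
      (-16 * (n : ℤ) ^ 2 - 200 * (n : ℤ) - 616) * (u (n + 6) : ℤ) +
      (-2 * (n : ℤ) ^ 2 - 32 * (n : ℤ) - 128) * (u (n + 7) : ℤ) +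
      ((n : ℤ) ^ 2 + 17 * (n : ℤ) + 72) * (u (n + 8) : ℤ) = 0 := by
  obtain ⟨h0, h1, h2, h3, h4, h5, h6, h7⟩ := u_values
  refine ⟨h0, h1, h2, h3, h4, h5, h6, h7, fun n => ?_⟩
  have h := coeff_recurrence_of_ode (ode_of_sq_eq sq_one_sub_two_X_mul_depthOneSeries_one
    sq_one_sub_two_X_mul_depthOneSeries_zero) n
  simp only [coeff_succ_one_sub_two_X_mul, coeff_depthOneSeries, ← u_eq_card] at h
  qify
  linear_combination (-1 / 2 : ℚ) * h
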